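/- arXiv:1404.4623 — 3 statements merged into one kernel-verified Lean document; each statement's English description precedes it below -/
import Mathlib

section
/- Let T be a k-linear, Hom-finite, Krull-Schmidt triangulated category over an algebraically closed field k such that dim Hom(x,y) ≤ 1 for all indecomposable objects x, y. Suppose a --f--> e^m --> b --> Σa is a non-split distinguished triangle with a, b, e indecomposable. Then m ≤ 1. -/
open CategoryTheory CategoryTheory.Limits CategoryTheory.Pretriangulated

/-- In a non-split distinguished triangle `a ⟶ e^m ⟶ b ⟶ Σa` with `a`, `b`, `e`
indecomposable, in a `k`-linear Hom-finite Krull-Schmidt (i.e. idempotent complete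
and Hom-finite) triangulated category with all Hom-spaces between indecomposables
at most one-dimensional, one has `m ≤ 1`. -/
theorem stmt_1 (k : Type*) [Field k] [IsAlgClosed k]
    {C : Type*} [Category C] [Preadditive C] [Linear k C] [HasZeroObject C]
    [HasShift C ℤ] [∀ n : ℤ, (shiftFunctor C n).Additive] [Pretriangulated C]
    [HasFiniteBiproducts C] [IsIdempotentComplete C]
    (homFinite : ∀ X Y : C, FiniteDimensional k (X ⟶ Y))
    (homDim : ∀ X Y : C, Indecomposable X → Indecomposable Y →
      Module.finrank k (X ⟶ Y) ≤ 1)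
    {a b e : C} (m : ℕ)
    (f : a ⟶ ⨁ (fun _ : Fin m => e)) (g : (⨁ (fun _ : Fin m => e)) ⟶ b)
    (h : b ⟶ a⟦(1 : ℤ)⟧)
    (hT : Triangle.mk f g h ∈ distTriang C) (hns : h ≠ 0)
    (ha : Indecomposable a) (hb : Indecomposable b) (he : Indecomposable e) :
    m ≤ 1 := by
  by_contra hm
  push_neg at hm
  haveI := homFinite a e
  -- find `j` and `p : e^m ⟶ e` with `f ≫ p = 0` and `ι j ≫ p = 𝟙 e`
  obtain ⟨j, p, hp0, hp1⟩ : ∃ (j : Fin m) (p : (⨁ fun _ : Fin m => e) ⟶ e),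
      f ≫ p = 0 ∧ biproduct.ι (fun _ : Fin m => e) j ≫ p = 𝟙 e := by
    set i0 : Fin m := ⟨0, by omega⟩ with hi0
    set i1 : Fin m := ⟨1, by omega⟩ with hi1
    have hne : i1 ≠ i0 := by
      refine Fin.ne_of_val_ne ?_
      rw [hi0, hi1]
      norm_num
    obtain ⟨v, hv⟩ := finrank_le_one_iff.mp (homDim a e ha he)
    obtain ⟨c1, hc1⟩ := hv (f ≫ biproduct.π (fun _ : Fin m => e) i0)
    obtain ⟨c2, hc2⟩ := hv (f ≫ biproduct.π (fun _ : Fin m => e) i1)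
    by_cases hc : c1 = 0
    · refine ⟨i0, biproduct.π _ i0, ?_, biproduct.ι_π_self _ _⟩
      rw [← hc1, hc, zero_smul]
    · refine ⟨i1, biproduct.π _ i1 - (c2 * c1⁻¹) • biproduct.π _ i0, ?_, ?_⟩
      · rw [Preadditive.comp_sub, Linear.comp_smul, ← hc1, ← hc2, smul_smul]
        rw [mul_assoc, inv_mul_cancel₀ hc, mul_one, sub_self]
      · rw [Preadditive.comp_sub, Linear.comp_smul, biproduct.ι_π_self,
          biproduct.ι_π_ne _ hne, smul_zero, sub_zero]
  -- factor `p` through `b`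
  obtain ⟨q, hq⟩ : ∃ q : b ⟶ e, p = g ≫ q := Triangle.yoneda_exact₂ _ hT p hp0
  set r : e ⟶ b := biproduct.ι (fun _ : Fin m => e) j ≫ g with hr
  have hrq : r ≫ q = 𝟙 e := by
    rw [hr, Category.assoc, ← hq, hp1]
  -- split the complementary idempotent on `b`
  have hrqr : r ≫ q ≫ r = r := by
    rw [← Category.assoc, hrq, Category.id_comp]
  have hidem : (𝟙 b - q ≫ r) ≫ (𝟙 b - q ≫ r) = 𝟙 b - q ≫ r := by
    simp only [Preadditive.comp_sub, Preadditive.sub_comp, Category.comp_id,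
      Category.id_comp, Category.assoc, hrqr]
    abel
  obtain ⟨Y, i, e', hie, hei⟩ := IsIdempotentComplete.idempotents_split b _ hidem
  have hmono_i : Mono i := ⟨fun {Z} u v huv => by
    have := congrArg (· ≫ e') huv
    simpa [Category.assoc, hie] using this⟩
  have hmono_r : Mono r := ⟨fun {Z} u v huv => by
    have := congrArg (· ≫ q) huv
    simpa [Category.assoc, hrq] using this⟩
  -- build the iso `b ≅ e ⊞ Y`
  have hre' : r ≫ e' = 0 := by
    rw [← cancel_mono i, Category.assoc, hei, zero_comp,
      Preadditive.comp_sub, Category.comp_id, hrqr, sub_self]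
  have hiq : i ≫ q = 0 := by
    rw [← cancel_mono r, Category.assoc, zero_comp]
    have hqr' : q ≫ r = 𝟙 b - e' ≫ i := by rw [hei]; abel
    rw [hqr', Preadditive.comp_sub, Category.comp_id, ← Category.assoc, hie,
      Category.id_comp, sub_self]
  let φ : b ⟶ e ⊞ Y := biprod.lift q e'
  let ψ : e ⊞ Y ⟶ b := biprod.desc r i
  have hφψ : φ ≫ ψ = 𝟙 b := by
    simp only [φ, ψ, biprod.lift_desc]
    rw [hei]; abel
  have hψφ : ψ ≫ φ = 𝟙 (e ⊞ Y) := by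
    apply biprod.hom_ext' <;> apply biprod.hom_ext <;>
      simp [φ, ψ, reassoc_of% hrq, reassoc_of% hre', reassoc_of% hiq,
        reassoc_of% hie, hrq, hre', hiq, hie]
  have hiso : b ≅ e ⊞ Y := ⟨φ, ψ, hφψ, hψφ⟩
  rcases hb.2 e Y hiso with hz | hz
  · exact he.1 hz
  · -- Y is zero, so `q ≫ r = 𝟙 b`, hence `r` is an iso
    have he'i : e' ≫ i = 0 := by
      rw [hz.eq_of_tgt e' 0, zero_comp]
    rw [he'i] at hei
    have hqr : q ≫ r = 𝟙 b := (sub_eq_zero.mp hei.symm).symm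
    haveI : IsIso r := ⟨q, hrq, hqr⟩
    have hgh : g ≫ h = 0 := comp_distTriang_mor_zero₂₃ _ hT
    have hrh : r ≫ h = 0 := by
      rw [hr, Category.assoc, hgh, comp_zero]
    exact hns ((cancel_epi r).mp (by rw [hrh, comp_zero]))
end

section
/- Let T be a k-linear, Hom-finite, Krull-Schmidt triangulated category with dim Hom(x,y) ≤ 1 for all indecomposables x,y, and Ext^1(x,x) = 0 for every indecomposable x, where Ext^1(x,y) := Hom(x, Σy). If a → ⊕_{i=1}^n e_i → b → Σa is a non-split distinguished triangle with a, b and all e_i indecomposable, then Ext^1(e_i, a) = 0 and Ext^1(b, e_i) = 0 for each i. -/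
/-!
Applying `Hom(-, Σa)` to the triangle, a map `eᵢ ⟶ Σa` gives a map `⊕ e ⟶ Σa` whose restriction
to `a` is a self-extension of `a`, hence zero; so it factors through `b ⟶ Σa`. That space has
dimension at most one, so it is spanned by the connecting morphism `h ≠ 0`, and `g ≫ h = 0` kills
the map. Dually, applying `Hom(b, -)` to the rotated triangle, a map `b ⟶ Σeᵢ` composed into `Σb`
is a self-extension of `b`, so it factors through `h`, and `h ≫ Σf = 0`.
-/

open CategoryTheory CategoryTheory.Limits CategoryTheory.Pretriangulated

lemma CategoryTheory.Limits.Indecomposable.map_of_isEquivalence {C D : Type*} [Category C]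
    [Category D] [Preadditive C] [Preadditive D] [HasBinaryBiproducts C]
    [HasBinaryBiproducts D] (F : C ⥤ D) [F.IsEquivalence] [F.Additive] {X : C}
    (hX : Indecomposable X) : Indecomposable (F.obj X) := by
  let E := F.asEquivalence
  have : E.functor.Additive := ‹F.Additive›
  have := preservesBinaryBiproducts_of_preservesBiproducts E.inverse
  have isZero_of_map {Y : D} (hY : IsZero (E.inverse.obj Y)) : IsZero Y :=
    (E.counitIso.app Y).isZero_iff.mp (E.functor.map_isZero hY)
  refine ⟨fun h0 => hX.1 ((E.unitIso.app X).isZero_iff.mpr (E.inverse.map_isZero h0)),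
    fun Y Z iso => ?_⟩
  rcases hX.2 _ _ (E.unitIso.app X ≪≫ E.inverse.mapIso iso ≪≫ E.inverse.mapBiprod Y Z) with
    h | h
  exacts [Or.inl (isZero_of_map h), Or.inr (isZero_of_map h)]

section

variable {C : Type*} [Category C] [Preadditive C] [HasZeroObject C] [HasShift C ℤ]
  [∀ n : ℤ, (CategoryTheory.shiftFunctor C n).Additive] [Pretriangulated C]
  (T : Triangle C) (hT : T ∈ distTriang C)
include hT

lemma CategoryTheory.Pretriangulated.Triangle.eq_zero_of_mor₁_comp_eq_zero {X : C}
    (ψ : T.obj₂ ⟶ X) (hψ : T.mor₁ ≫ ψ = 0) (h₃ : ∀ θ : T.obj₃ ⟶ X, T.mor₂ ≫ θ = 0) :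
    ψ = 0 := by
  obtain ⟨θ, rfl⟩ := Triangle.yoneda_exact₂ T hT ψ hψ
  exact h₃ θ

lemma CategoryTheory.Pretriangulated.Triangle.eq_zero_of_comp_shift_mor₁_eq_zero {X : C}
    (ψ : X ⟶ T.obj₁⟦(1 : ℤ)⟧) (hψ : ψ ≫ T.mor₁⟦(1 : ℤ)⟧' = 0)
    (h₃ : ∀ θ : X ⟶ T.obj₃, θ ≫ T.mor₃ = 0) : ψ = 0 := by
  obtain ⟨θ, rfl⟩ := Triangle.coyoneda_exact₁ T hT ψ hψ
  exact h₃ θ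

end

/-- In a non-split distinguished triangle `a ⟶ ⊕ᵢ eᵢ ⟶ b ⟶ Σa` with `a`, `b` and
all `eᵢ` indecomposable, in a `k`-linear Hom-finite Krull-Schmidt (i.e. idempotent
complete and Hom-finite) triangulated category with Hom-spaces between
indecomposables at most one-dimensional and no self-extensions of indecomposables,
one has `Ext¹(eᵢ, a) = 0` and `Ext¹(b, eᵢ) = 0`, where `Ext¹(x,y) = Hom(x, Σy)`. -/
theorem stmt_2 (k : Type*) [Field k] [IsAlgClosed k]
    {C : Type*} [Category C] [Preadditive C] [Linear k C] [HasZeroObject C]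
    [HasShift C ℤ] [∀ n : ℤ, (shiftFunctor C n).Additive] [Pretriangulated C]
    [HasFiniteBiproducts C] [IsIdempotentComplete C]
    (homFinite : ∀ X Y : C, FiniteDimensional k (X ⟶ Y))
    (homDim : ∀ X Y : C, Indecomposable X → Indecomposable Y →
      Module.finrank k (X ⟶ Y) ≤ 1)
    (extVanish : ∀ X : C, Indecomposable X → ∀ φ : X ⟶ X⟦(1 : ℤ)⟧, φ = 0)
    {a b : C} {n : ℕ} (e : Fin n → C)
    (f : a ⟶ ⨁ e) (g : (⨁ e) ⟶ b) (h : b ⟶ a⟦(1 : ℤ)⟧)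
    (hT : Triangle.mk f g h ∈ distTriang C) (hns : h ≠ 0)
    (ha : Indecomposable a) (hb : Indecomposable b)
    (he : ∀ i, Indecomposable (e i)) :
    ∀ i, (∀ φ : e i ⟶ a⟦(1 : ℤ)⟧, φ = 0) ∧ (∀ ψ : b ⟶ (e i)⟦(1 : ℤ)⟧, ψ = 0) := by
  have := homFinite b (a⟦(1 : ℤ)⟧)
  have hspan : ∀ θ : b ⟶ a⟦(1 : ℤ)⟧, ∃ c : k, c • h = θ :=
    (finrank_eq_one_iff_of_nonzero' h hns).1 <| le_antisymm
      (homDim _ _ hb (Indecomposable.map_of_isEquivalence (shiftFunctor C (1 : ℤ)) ha))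
      (Module.finrank_pos_iff_exists_ne_zero.2 ⟨h, hns⟩)
  have hgh : g ≫ h = 0 := comp_distTriang_mor_zero₂₃ _ hT
  have hhf : h ≫ f⟦(1 : ℤ)⟧' = 0 := comp_distTriang_mor_zero₃₁ _ hT
  intro i
  refine ⟨fun φ => ?_, fun ψ => ?_⟩
  · have : biproduct.π e i ≫ φ = 0 :=
      Triangle.eq_zero_of_mor₁_comp_eq_zero _ hT _ (extVanish a ha _) fun θ => by
        obtain ⟨c, rfl⟩ := hspan θ
        show g ≫ (c • h) = 0
        rw [Linear.comp_smul, hgh, smul_zero]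
    exact (cancel_epi (biproduct.π e i)).1 (this.trans comp_zero.symm)
  · have hψ : (ψ ≫ (biproduct.ι e i)⟦(1 : ℤ)⟧') ≫ g⟦(1 : ℤ)⟧' = 0 := by
      simpa only [Functor.map_comp, Category.assoc] using
        extVanish b hb (ψ ≫ (biproduct.ι e i ≫ g)⟦(1 : ℤ)⟧')
    have : ψ ≫ (biproduct.ι e i)⟦(1 : ℤ)⟧' = 0 :=
      Triangle.eq_zero_of_comp_shift_mor₁_eq_zero _ (rot_of_distTriang _ hT) _ hψ fun θ => by
        obtain ⟨c, rfl⟩ := hspan θ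
        show (c • h) ≫ (-f⟦(1 : ℤ)⟧') = 0
        rw [Linear.smul_comp, Preadditive.comp_neg, hhf, neg_zero, smul_zero]
    exact (cancel_mono ((biproduct.ι e i)⟦(1 : ℤ)⟧')).1 (this.trans zero_comp.symm)
end

section
/- Let T be a Krull-Schmidt triangulated category and let a --f--> e1 ⊕ e2 --(g1;g2)--> b --h--> Σa be a distinguished triangle with a and b indecomposable, e2 ≠ 0, and h ≠ 0 (the triangle is non-split). If the component f2 : a → e2 of f is zero, then e2 is isomorphic to a direct summand of b; since b is indecomposable, e2 ≅ b and this forces g2 to be an isomorphism onto that summand. -/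
/-!
Since `f₂ = 0`, the projection `e₁ ⊞ e₂ ⟶ e₂` kills the first map of the triangle, so it factors
through `b`; restricted to `e₂` this factorisation is a retraction `r` of `g₂`. As `End b` is local,
either `r ≫ g₂` is invertible, making `g₂` epi and hence an isomorphism, or `𝟙 - r ≫ g₂` is, and
then `g₂ ≫ (𝟙 - r ≫ g₂) = 0` forces `g₂ = 0`, i.e. `e₂ ≅ 0`.
-/

open CategoryTheory CategoryTheory.Limits CategoryTheory.Pretriangulated

namespace CategoryTheory

lemma isIso_of_isSplitMono_of_isIso_or_isIso_id_sub {C : Type*} [Category C] [Preadditive C]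
    {X Y : C} (hX : ∀ φ : X ⟶ X, IsIso φ ∨ IsIso (𝟙 X - φ)) (g : Y ⟶ X) [IsSplitMono g]
    (hY : ¬ IsZero Y) : IsIso g := by
  rcases hX (retraction g ≫ g) with hiso | hiso
  · have : Epi g := epi_of_epi (retraction g) g
    exact isIso_of_epi_of_isSplitMono g
  · have hg : g ≫ (𝟙 X - retraction g ≫ g) = 0 := by
      simp [Preadditive.comp_sub]
    have hg0 : g = 0 := by
      rwa [← cancel_mono (𝟙 X - retraction g ≫ g), zero_comp]
    refine absurd ((IsZero.iff_id_eq_zero Y).mpr ?_) hY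
    rw [← IsSplitMono.id g, congrArg (· ≫ retraction g) hg0, zero_comp]

namespace Pretriangulated

variable {C : Type*} [Category C] [Preadditive C] [HasZeroObject C] [HasShift C ℤ]
  [∀ n : ℤ, (shiftFunctor C n).Additive] [Pretriangulated C] [HasBinaryBiproducts C]

lemma isSplitMono_of_biprod_lift_zero_mem_distTriang {a b e₁ e₂ : C} (f₁ : a ⟶ e₁)
    (g₁ : e₁ ⟶ b) (g₂ : e₂ ⟶ b) (h : b ⟶ a⟦(1 : ℤ)⟧)
    (hT : Triangle.mk (biprod.lift f₁ 0) (biprod.desc g₁ g₂) h ∈ distTriang C) :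
    IsSplitMono g₂ := by
  obtain ⟨r, hr⟩ := Triangle.yoneda_exact₂ _ hT (biprod.snd : e₁ ⊞ e₂ ⟶ e₂) (biprod.lift_snd _ _)
  change b ⟶ e₂ at r
  change biprod.snd = biprod.desc g₁ g₂ ≫ r at hr
  exact ⟨⟨r, by simpa using (biprod.inr ≫= hr).symm⟩⟩

end Pretriangulated

end CategoryTheory

/-- Let `a ⟶ e1 ⊞ e2 ⟶ b ⟶ Σa` be a non-split distinguished triangle in a
Krull-Schmidt (idempotent complete, with local endomorphism rings of
indecomposables) triangulated category, with `a`, `b` indecomposable and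
`e2 ≠ 0`. If the component `f2 : a ⟶ e2` of the first map is zero, then
`e2 ≅ b` and the component `g2 : e2 ⟶ b` of the second map is an isomorphism. -/
theorem stmt_14 {C : Type*} [Category C] [Preadditive C] [HasZeroObject C]
    [HasShift C ℤ] [∀ n : ℤ, (shiftFunctor C n).Additive] [Pretriangulated C]
    [HasBinaryBiproducts C] [IsIdempotentComplete C]
    (krullSchmidt : ∀ X : C, Indecomposable X →
      ∀ φ : X ⟶ X, IsIso φ ∨ IsIso (𝟙 X - φ))
    {a b e₁ e₂ : C} (f₁ : a ⟶ e₁) (f₂ : a ⟶ e₂) (g₁ : e₁ ⟶ b) (g₂ : e₂ ⟶ b)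
    (h : b ⟶ a⟦(1 : ℤ)⟧)
    (hT : Triangle.mk (biprod.lift f₁ f₂) (biprod.desc g₁ g₂) h ∈ distTriang C)
    (ha : Indecomposable a) (hb : Indecomposable b)
    (he₂ : ¬ IsZero e₂) (hns : h ≠ 0) (hf₂ : f₂ = 0) :
    Nonempty (e₂ ≅ b) ∧ IsIso g₂ := by
  subst hf₂
  have := isSplitMono_of_biprod_lift_zero_mem_distTriang f₁ g₁ g₂ h hT
  have := isIso_of_isSplitMono_of_isIso_or_isIso_id_sub (krullSchmidt b hb) g₂ he₂
  exact ⟨⟨asIso g₂⟩, inferInstance⟩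
end
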